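/- Let f be a set of monomials of degree 2 in R = k[x_1,...,x_n] and let P ⊂ k[T_1,...,T_m] be the toric (presentation) ideal of k[f] via T_j ↦ f_j. Then P is generated by the binomials p_w = T_{w^+} − T_{w^−} associated to the even closed walks w of the graph with loops G(f). -/

import Mathlib

/-!
A monomial map sends monomials to monomials, so its kernel is spanned by the binomials
`T^U - T^V` with `f^U = f^V`. Read `U` and `V` as multisets of edges of `G(f)` with the same
degree at every vertex. Starting along an edge of `U` and following edges of `V` and `U`
alternately, the degree balance lets the walk go on until it is back at its start after an
even number of steps: an even closed walk `w` with `w⁺ ≤ U` and `w⁻ ≤ V`. Then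
`T^U - T^V = T^{U-w⁺} p_w + T^{w⁻} (T^{U-w⁺} - T^{V-w⁻})`, and induction on `|U|` finishes.
Conversely every `p_w` lies in the kernel, because a closed walk leaves each vertex it visits
along an edge of one parity and enters it along an edge of the other.
-/

noncomputable section

namespace PolarAlg

open MvPolynomial

variable (k : Type*) [Field k]

/-- The exponent vector of the degree-2 monomial attached to an edge (or loop) `e`. -/
def sym2Exp {n : ℕ} (e : Sym2 (Fin n)) : Fin n → ℕ :=
  Sym2.lift ⟨fun a b i => (if a = i then 1 else 0) + (if b = i then 1 else 0),
    fun a b => funext fun i => add_comm _ _⟩ e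

/-- The monomial with exponent vector `g`. -/
def mon {n : ℕ} (g : Fin n → ℕ) : MvPolynomial (Fin n) k := ∏ i, X i ^ g i

/-- The degree-2 monomial `f i` attached to the edge `ε i` of the graph of `f`. -/
def fmon {n : ℕ} {ι : Type*} (ε : ι → Sym2 (Fin n)) (i : ι) : MvPolynomial (Fin n) k :=
  mon k (sym2Exp (ε i))

/-- `(vtx, eidx)` is an (even, of length `2r`) closed walk in the graph `G(f)` whose edges are
indexed by `ι` via `ε` : the `j`-th edge of the walk is the edge `ε (eidx j)`, joining
`vtx j` and `vtx (j+1)`. -/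
def IsWalkIn {n r : ℕ} {ι : Type*} (ε : ι → Sym2 (Fin n)) (vtx : ZMod (2 * r) → Fin n)
    (eidx : ZMod (2 * r) → ι) : Prop :=
  ∀ j, ε (eidx j) = s(vtx j, vtx (j + 1))

/-- The exponent vector of the lcm `g` of the (distinct) edge monomials of a walk. -/
def supExp {n r : ℕ} (vtx : ZMod (2 * r) → Fin n) : Fin n → ℕ := fun l =>
  (Finset.range (2 * r)).sup fun j =>
    sym2Exp (s(vtx (j : ZMod (2 * r)), vtx ((j : ZMod (2 * r)) + 1))) l

/-- The differential syzygy `z_w` attached to an even closed walk `w = (vtx, eidx)`: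
its `i`-th coordinate is the sum of the alternating terms `± g/g_j` over the positions `j`
at which the walk traverses the edge `f i`. -/
def zw {n r : ℕ} {ι : Type*} [DecidableEq ι] (ε : ι → Sym2 (Fin n))
    (vtx : ZMod (2 * r) → Fin n) (eidx : ZMod (2 * r) → ι) : ι → MvPolynomial (Fin n) k :=
  fun i => ∑ j ∈ Finset.range (2 * r),
    if eidx (j : ZMod (2 * r)) = i then
      (-1 : MvPolynomial (Fin n) k) ^ j * mon k fun l => supExp vtx l - sym2Exp (ε i) l
    else 0

/-- The binomial `p_w = T_{w⁺} - T_{w⁻}` attached to an even closed walk. -/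
def pw {r : ℕ} {ι : Type*} (eidx : ZMod (2 * r) → ι) : MvPolynomial ι k :=
  (∏ j ∈ (Finset.range (2 * r)).filter (fun j => Even j), X (eidx (j : ZMod (2 * r)))) -
    ∏ j ∈ (Finset.range (2 * r)).filter (fun j => ¬ Even j), X (eidx (j : ZMod (2 * r)))

/-- The differential syzygy module `Z` of `f`, as the set of syzygies of the transposed
Jacobian module: vectors `a` with `∑ i, a i · df i = 0`, i.e. `∑ i, a i ∂f i/∂x l = 0`
for every `l`. -/
def Zset (n : ℕ) {ι : Type*} [Fintype ι] (ε : ι → Sym2 (Fin n)) :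
    Set (ι → MvPolynomial (Fin n) k) :=
  {a | ∀ l : Fin n, ∑ i, a i * pderiv l (fmon k ε i) = 0}

/-- The generators of the polar syzygy module: the `T`-gradients of the polynomial
relations of `f`, evaluated at `f`. -/
def polarSet (n : ℕ) {ι : Type*} [Fintype ι] (ε : ι → Sym2 (Fin n)) :
    Set (ι → MvPolynomial (Fin n) k) :=
  {v | ∃ F : MvPolynomial ι k, aeval (fmon k ε) F = 0 ∧
    v = fun i => aeval (fmon k ε) (pderiv i F)}

/-- `f` is polarizable: the polar syzygy module `P` equals the differential syzygy module
`Z` (the inclusion `P ⊆ Z` always holds, by the chain rule). -/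
def Polarizable (n : ℕ) {ι : Type*} [Fintype ι] (ε : ι → Sym2 (Fin n)) : Prop :=
  Zset k n ε ⊆ ↑(Submodule.span (MvPolynomial (Fin n) k) (polarSet k n ε))

end PolarAlg

namespace MvPolynomial

variable {R σ τ : Type*} [CommRing R]

/-- Choose a preimage `g d` of each exponent `d` in the range of `D` and let `ψ` be the linear
map `X^d ↦ X^{g d}`. Every `F` differs from `ψ (φ F)` by a combination of binomials killed by
`φ`, and `ψ (φ F) = 0` when `F ∈ ker φ`. -/
theorem ker_le_of_binomial_mem (φ : MvPolynomial σ R →ₐ[R] MvPolynomial τ R)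
    (D : (σ →₀ ℕ) → (τ →₀ ℕ)) (hφ : ∀ u, φ (monomial u 1) = monomial (D u) 1)
    (I : Ideal (MvPolynomial σ R))
    (hI : ∀ u v, D u = D v → monomial u 1 - monomial v 1 ∈ I) :
    RingHom.ker φ ≤ I := by
  intro F hF
  let g := Function.invFun D
  let ψ := (basisMonomials τ R).constr R fun d => (monomial (g d) 1 : MvPolynomial σ R)
  have hψ : ∀ d, ψ (monomial d 1) = monomial (g d) 1 := fun d => by
    simpa using (basisMonomials τ R).constr_basis R _ d
  have hsub : ∀ G, G - ψ (φ G) ∈ I := fun G => by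
    induction G using MvPolynomial.induction_on' with
    | monomial u a =>
      have hsmul : (monomial u a : MvPolynomial σ R) = a • monomial u 1 := by
        rw [smul_monomial, smul_eq_mul, mul_one]
      rw [hsmul, map_smul, map_smul, hφ, hψ, ← smul_sub, smul_eq_C_mul]
      exact I.mul_mem_left _ (hI _ _ (Function.invFun_eq ⟨u, rfl⟩).symm)
    | add G H hG hH =>
      rw [map_add, map_add, add_sub_add_comm]
      exact add_mem hG hH
  simpa [RingHom.mem_ker.1 hF] using hsub F

end MvPolynomial

namespace Finset

variable {M : Type*} [AddCommMonoid M]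

theorem sum_filter_even_add_succ (f : ℕ → M) (r : ℕ) :
    ∑ j ∈ (range (2 * r)).filter (fun j => Even j), (f j + f (j + 1)) =
      ∑ j ∈ range (2 * r), f j := by
  induction r with
  | zero => simp
  | succ r ih =>
    rw [sum_filter] at ih ⊢
    simp only [Nat.mul_succ, sum_range_succ, ih, Nat.even_add_one, even_two_mul]
    simp [add_assoc]

theorem sum_filter_odd_add_succ (f : ℕ → M) (r : ℕ) :
    ∑ j ∈ (range (2 * r)).filter (fun j => ¬ Even j), (f j + f (j + 1)) =
      ∑ j ∈ range (2 * r), f (j + 1) := by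
  induction r with
  | zero => simp
  | succ r ih =>
    rw [sum_filter] at ih ⊢
    simp only [Nat.mul_succ, sum_range_succ, ih, Nat.even_add_one, even_two_mul]
    simp [add_assoc]

end Finset

namespace PolarAlg

open MvPolynomial Finset

variable {k : Type*} [Field k] {n : ℕ} {ι α : Type*}

theorem sym2Exp_mk (a b : Fin n) : sym2Exp s(a, b) = Pi.single a 1 + Pi.single b 1 := by
  funext i
  simp [sym2Exp, Pi.single_apply, eq_comm]

theorem sym2Exp_pos_iff {z : Sym2 (Fin n)} {a : Fin n} : 0 < sym2Exp z a ↔ a ∈ z := by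
  induction z using Sym2.ind with
  | _ b c =>
    by_cases hb : a = b <;> by_cases hc : a = c <;> simp [sym2Exp_mk, Pi.single_apply, hb, hc]

theorem mon_add (g h : Fin n → ℕ) : mon k (g + h) = mon k g * mon k h := by
  simp [mon, pow_add, prod_mul_distrib]

theorem mon_eq_monomial (g : Fin n → ℕ) :
    mon k g = monomial (Finsupp.equivFunOnFinite.symm g) 1 := by
  rw [mon, prod_X_pow]
  congr
  ext i
  simp

/-- The exponent vector of `∏_{i ∈ S} f_i`: at a vertex it counts the edges of `S` there,
loops twice. -/
def edgeDeg (ε : ι → Sym2 (Fin n)) (S : Multiset ι) : Fin n → ℕ :=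
  (S.map fun i => sym2Exp (ε i)).sum

section edgeDeg

variable {ε : ι → Sym2 (Fin n)}

@[simp] theorem edgeDeg_zero : edgeDeg ε 0 = 0 := rfl

@[simp] theorem edgeDeg_cons (i : ι) (S : Multiset ι) :
    edgeDeg ε (i ::ₘ S) = sym2Exp (ε i) + edgeDeg ε S := by
  simp [edgeDeg]

@[simp] theorem edgeDeg_add (S T : Multiset ι) :
    edgeDeg ε (S + T) = edgeDeg ε S + edgeDeg ε T := by
  simp [edgeDeg]

theorem edgeDeg_eq_of_mem [DecidableEq ι] {S : Multiset ι} {e : ι} {a c : Fin n} (he : e ∈ S)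
    (hε : ε e = s(a, c)) :
    edgeDeg ε S = Pi.single a 1 + Pi.single c 1 + edgeDeg ε (S.erase e) := by
  conv_lhs => rw [← Multiset.cons_erase he]
  rw [edgeDeg_cons, hε, sym2Exp_mk]

theorem exists_mem_of_edgeDeg_pos {S : Multiset ι} {a : Fin n} (h : 0 < edgeDeg ε S a) :
    ∃ e ∈ S, a ∈ ε e := by
  induction S using Multiset.induction with
  | empty => simp at h
  | cons i S ih =>
    rw [edgeDeg_cons, Pi.add_apply] at h
    rcases Nat.eq_zero_or_pos (sym2Exp (ε i) a) with h0 | hpos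
    · obtain ⟨e, he, hae⟩ := ih (by omega)
      exact ⟨e, Multiset.mem_cons_of_mem he, hae⟩
    · exact ⟨i, Multiset.mem_cons_self i S, sym2Exp_pos_iff.1 hpos⟩

theorem eq_zero_of_edgeDeg_eq_zero [DecidableEq ι] {S : Multiset ι} (h : edgeDeg ε S = 0) :
    S = 0 := by
  by_contra hS
  obtain ⟨e, he⟩ := Multiset.exists_mem_of_ne_zero hS
  obtain ⟨c, hc⟩ := Sym2.mem_iff_exists.1 (Sym2.out_fst_mem (ε e))
  have := congrFun (edgeDeg_eq_of_mem he hc) (ε e).out.1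
  simp [h] at this
  omega

theorem aeval_prod_map_X (S : Multiset ι) :
    aeval (fmon k ε) ((S.map X).prod : MvPolynomial ι k) = mon k (edgeDeg ε S) := by
  induction S using Multiset.induction with
  | empty => simp [mon]
  | cons i S ih =>
    rw [Multiset.map_cons, Multiset.prod_cons, map_mul, ih, aeval_X, edgeDeg_cons, mon_add, fmon]

end edgeDeg

theorem prod_map_X_toMultiset (u : ι →₀ ℕ) :
    (u.toMultiset.map X).prod = (monomial u 1 : MvPolynomial ι k) := by
  induction u using Finsupp.induction with
  | zero => simp
  | single_add i a u _ _ ih =>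
    rw [Finsupp.toMultiset_add, Multiset.map_add, Multiset.prod_add, ih,
      Finsupp.toMultiset_single, monomial_single_add (R := k)]
    simp [Multiset.map_nsmul, Multiset.prod_nsmul]

def seqCons (a : α) (E : ℕ → α) : ℕ → α
  | 0 => a
  | j + 1 => E j

def evenPart (L : ℕ) (E : ℕ → α) : Multiset α :=
  ((range L).filter (fun j => Even j)).val.map E

def oddPart (L : ℕ) (E : ℕ → α) : Multiset α :=
  ((range L).filter (fun j => ¬ Even j)).val.map E

theorem evenPart_succ (L : ℕ) (E : ℕ → α) :
    evenPart (L + 1) E = E 0 ::ₘ oddPart L (fun j => E (j + 1)) := by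
  rw [evenPart, range_add_one', filter_insert, if_pos Even.zero, insert_val_of_notMem (by simp),
    Multiset.map_cons, filter_map, map_val, Multiset.map_map]
  congr 2
  exact congrArg _ (filter_congr fun j _ => Nat.even_add_one)

theorem oddPart_succ (L : ℕ) (E : ℕ → α) :
    oddPart (L + 1) E = evenPart L (fun j => E (j + 1)) := by
  rw [oddPart, range_add_one', filter_insert, if_neg (not_not.2 Even.zero), filter_map,
    map_val, Multiset.map_map]
  congr 2
  exact filter_congr fun j _ => show ¬Even (j + 1) ↔ Even j by rw [Nat.even_add_one, not_not]

structure IsAltWalk (ε : ι → Sym2 (Fin n)) (U V : Multiset ι) (L : ℕ) (E : ℕ → ι)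
    (p : ℕ → Fin n) : Prop where
  adj : ∀ j < L, ε (E j) = s(p j, p (j + 1))
  evenPart_le : evenPart L E ≤ U
  oddPart_le : oddPart L E ≤ V

namespace IsAltWalk

variable {ε : ι → Sym2 (Fin n)} {U V : Multiset ι} {L : ℕ} {E : ℕ → ι} {p : ℕ → Fin n}

theorem nil : IsAltWalk ε U V 0 E p :=
  ⟨by simp, by simp [evenPart], by simp [oddPart]⟩

theorem cons_cons [DecidableEq ι] {e e' : ι} {a c : Fin n}
    (hw : IsAltWalk ε (U.erase e) (V.erase e') L E p) (he : e ∈ U) (he' : e' ∈ V)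
    (hε : ε e = s(a, c)) (hε' : ε e' = s(c, p 0)) :
    IsAltWalk ε U V (L + 2) (seqCons e (seqCons e' E)) (seqCons a (seqCons c p)) where
  adj
    | 0, _ => hε
    | 1, _ => hε'
    | j + 2, hj => hw.adj j (by omega)
  evenPart_le := by
    rw [evenPart_succ, oddPart_succ]
    exact (Multiset.cons_le_cons e hw.evenPart_le).trans_eq (Multiset.cons_erase he)
  oddPart_le := by
    rw [oddPart_succ, evenPart_succ]
    exact (Multiset.cons_le_cons e' hw.oddPart_le).trans_eq (Multiset.cons_erase he')

end IsAltWalk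

section walks

variable {ε : ι → Sym2 (Fin n)}

/-- After a step along `U` and a step along `V` the degree balance still holds, with `a` moved
to the new endpoint; so the walk can be continued until it reaches `b`. -/
theorem exists_isAltWalk [DecidableEq ι] {U V : Multiset ι} {a b : Fin n} {e : ι} (he : e ∈ U)
    (ha : a ∈ ε e) (hdeg : edgeDeg ε U + Pi.single b 1 = edgeDeg ε V + Pi.single a 1) :
    ∃ r E p, p 0 = a ∧ p (2 * (r + 1)) = b ∧ IsAltWalk ε U V (2 * (r + 1)) E p := by
  obtain ⟨N, hN⟩ : ∃ N, Multiset.card U = N := ⟨_, rfl⟩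
  induction N generalizing U V a e with
  | zero => simp_all
  | succ N ih =>
    obtain ⟨c, hc⟩ := Sym2.mem_iff_exists.1 ha
    rw [edgeDeg_eq_of_mem he hc] at hdeg
    have hVc : 0 < edgeDeg ε V c := by
      have := congrFun hdeg c
      simp only [Pi.add_apply, Pi.single_eq_same] at this
      omega
    obtain ⟨e', he', hce'⟩ := exists_mem_of_edgeDeg_pos hVc
    obtain ⟨d, hd⟩ := Sym2.mem_iff_exists.1 hce'
    rw [edgeDeg_eq_of_mem he' hd] at hdeg
    have hdeg' : edgeDeg ε (U.erase e) + Pi.single b 1 =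
        edgeDeg ε (V.erase e') + Pi.single d 1 := by
      funext x
      have := congrFun hdeg x
      simp only [Pi.add_apply] at this ⊢
      omega
    by_cases hdb : d = b
    · exact ⟨0, _, seqCons a (seqCons c fun _ => b), rfl, rfl,
        (IsAltWalk.nil (E := fun _ => e)).cons_cons he he' hc (hdb ▸ hd)⟩
    · have hUd : 0 < edgeDeg ε (U.erase e) d := by
        have := congrFun hdeg' d
        rw [Pi.add_apply, Pi.add_apply, Pi.single_eq_same, Pi.single_eq_of_ne hdb] at this
        omega
      obtain ⟨e'', he'', hde''⟩ := exists_mem_of_edgeDeg_pos hUd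
      have hN' : Multiset.card (U.erase e) = N := by
        rw [Multiset.card_erase_of_mem he, hN, Nat.pred_succ]
      obtain ⟨r, E, p, hp0, hpb, hw⟩ := ih he'' hde'' hdeg' hN'
      exact ⟨r + 1, _, _, rfl, hpb, hw.cons_cons he he' hc (hp0 ▸ hd)⟩

theorem edgeDeg_evenPart {r : ℕ} {E : ℕ → ι} {p : ℕ → Fin n}
    (hadj : ∀ j < 2 * r, ε (E j) = s(p j, p (j + 1))) :
    edgeDeg ε (evenPart (2 * r) E) = ∑ j ∈ range (2 * r), Pi.single (p j) 1 := by
  rw [edgeDeg, evenPart, Multiset.map_map,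
    ← sum_filter_even_add_succ fun j => Pi.single (p j) 1]
  refine sum_congr rfl fun j hj => ?_
  rw [Function.comp_apply, hadj j (mem_range.1 (mem_filter.1 hj).1), sym2Exp_mk]

theorem edgeDeg_oddPart {r : ℕ} {E : ℕ → ι} {p : ℕ → Fin n}
    (hadj : ∀ j < 2 * r, ε (E j) = s(p j, p (j + 1))) :
    edgeDeg ε (oddPart (2 * r) E) = ∑ j ∈ range (2 * r), Pi.single (p (j + 1)) 1 := by
  rw [edgeDeg, oddPart, Multiset.map_map,
    ← sum_filter_odd_add_succ fun j => Pi.single (p j) 1]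
  refine sum_congr rfl fun j hj => ?_
  rw [Function.comp_apply, hadj j (mem_range.1 (mem_filter.1 hj).1), sym2Exp_mk]

theorem edgeDeg_evenPart_eq_oddPart {r : ℕ} {E : ℕ → ι} {p : ℕ → Fin n}
    (hadj : ∀ j < 2 * r, ε (E j) = s(p j, p (j + 1))) (hclosed : p (2 * r) = p 0) :
    edgeDeg ε (evenPart (2 * r) E) = edgeDeg ε (oddPart (2 * r) E) := by
  rw [edgeDeg_evenPart hadj, edgeDeg_oddPart hadj]
  set f : ℕ → Fin n → ℕ := fun j => Pi.single (p j) 1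
  have h := (sum_range_succ f (2 * r)).symm.trans (sum_range_succ' f (2 * r))
  rw [show f (2 * r) = f 0 by simp only [f, hclosed]] at h
  exact add_right_cancel h

theorem pw_eq {r : ℕ} (eidx : ZMod (2 * r) → ι) :
    pw k eidx = ((evenPart (2 * r) fun j => eidx j).map X).prod -
      ((oddPart (2 * r) fun j => eidx j).map X).prod := by
  rw [pw, evenPart, oddPart, Multiset.map_map, Multiset.map_map]
  rfl

theorem aeval_pw_eq_zero {r : ℕ} {vtx : ZMod (2 * r) → Fin n} {eidx : ZMod (2 * r) → ι}
    (hw : IsWalkIn ε vtx eidx) : aeval (fmon k ε) (pw k eidx) = 0 := by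
  have hadj : ∀ j < 2 * r, ε (eidx j) = s(vtx j, vtx ((j + 1 : ℕ) : ZMod (2 * r))) :=
    fun j _ => by rw [hw, Nat.cast_succ]
  have hclosed : vtx ((2 * r : ℕ) : ZMod (2 * r)) = vtx ((0 : ℕ) : ZMod (2 * r)) := by
    rw [ZMod.natCast_self, Nat.cast_zero]
  rw [pw_eq, map_sub, aeval_prod_map_X, aeval_prod_map_X,
    edgeDeg_evenPart_eq_oddPart hadj hclosed, sub_self]

theorem isWalkIn_of_closed {r : ℕ} (hr : 0 < r) {E : ℕ → ι} {p : ℕ → Fin n}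
    (hadj : ∀ j < 2 * r, ε (E j) = s(p j, p (j + 1))) (hclosed : p (2 * r) = p 0) :
    IsWalkIn ε (fun z : ZMod (2 * r) => p z.val) (fun z => E z.val) := by
  have : NeZero (2 * r) := ⟨by omega⟩
  intro z
  have hsucc : (z + 1).val = (z.val + 1) % (2 * r) := by
    conv_lhs => rw [← ZMod.natCast_zmod_val z, ← Nat.cast_succ, ZMod.val_natCast]
  show ε (E z.val) = s(p z.val, p (z + 1).val)
  rw [hadj _ z.val_lt, hsucc]
  rcases Nat.lt_or_ge (z.val + 1) (2 * r) with hlt | hge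
  · rw [Nat.mod_eq_of_lt hlt]
  · rw [show z.val + 1 = 2 * r by have := z.val_lt; omega, Nat.mod_self, hclosed]

variable (k ε) in
def walkIdeal : Ideal (MvPolynomial ι k) :=
  Ideal.span {p : MvPolynomial ι k |
    ∃ r : ℕ, 1 ≤ r ∧ ∃ (vtx : ZMod (2 * r) → Fin n) (eidx : ZMod (2 * r) → ι),
      IsWalkIn ε vtx eidx ∧ p = pw k eidx}

theorem prod_evenPart_sub_prod_oddPart_mem_walkIdeal {r : ℕ} (hr : 0 < r) {E : ℕ → ι}
    {p : ℕ → Fin n} (hadj : ∀ j < 2 * r, ε (E j) = s(p j, p (j + 1)))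
    (hclosed : p (2 * r) = p 0) :
    ((evenPart (2 * r) E).map X).prod - ((oddPart (2 * r) E).map X).prod ∈ walkIdeal k ε := by
  have hval : ∀ j < 2 * r, E ((j : ZMod (2 * r)).val) = E j := fun j hj => by
    rw [ZMod.val_natCast_of_lt hj]
  have hpw : pw k (fun z : ZMod (2 * r) => E z.val) =
      ((evenPart (2 * r) E).map X).prod - ((oddPart (2 * r) E).map X).prod := by
    rw [pw_eq]
    congr 3 <;> exact Multiset.map_congr rfl fun j hj => hval j (by simp at hj; exact hj.1)
  exact hpw ▸ Ideal.subset_span ⟨r, hr, _, _, isWalkIn_of_closed hr hadj hclosed, rfl⟩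

theorem prod_sub_prod_mem_walkIdeal [DecidableEq ι] {U V : Multiset ι}
    (h : edgeDeg ε U = edgeDeg ε V) : (U.map X).prod - (V.map X).prod ∈ walkIdeal k ε := by
  obtain ⟨N, hN⟩ : ∃ N, Multiset.card U = N := ⟨_, rfl⟩
  induction N using Nat.strong_induction_on generalizing U V with
  | _ N ih =>
  rcases Multiset.empty_or_exists_mem U with rfl | ⟨e, he⟩
  · obtain rfl : V = 0 := eq_zero_of_edgeDeg_eq_zero h.symm
    simp
  obtain ⟨a, ha⟩ : ∃ a, a ∈ ε e := ⟨_, Sym2.out_fst_mem _⟩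
  obtain ⟨r, E, p, hp0, hpa, hw⟩ := exists_isAltWalk (V := V) he ha (by rw [h])
  have hclosed : p (2 * (r + 1)) = p 0 := hpa.trans hp0.symm
  have hWdeg := edgeDeg_evenPart_eq_oddPart hw.adj hclosed
  have hWmem := prod_evenPart_sub_prod_oddPart_mem_walkIdeal (k := k) r.succ_pos hw.adj hclosed
  have hWne : evenPart (2 * (r + 1)) E ≠ 0 := by
    rw [show 2 * (r + 1) = 2 * r + 1 + 1 from rfl, evenPart_succ]
    exact Multiset.cons_ne_zero
  obtain ⟨U', rfl⟩ := Multiset.le_iff_exists_add.1 hw.evenPart_le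
  obtain ⟨V', rfl⟩ := Multiset.le_iff_exists_add.1 hw.oddPart_le
  rw [edgeDeg_add, edgeDeg_add, hWdeg] at h
  have hU' : Multiset.card U' < N := by
    rw [← hN, Multiset.card_add]
    have := Multiset.card_pos.2 hWne
    omega
  have hrest := ih _ hU' (add_left_cancel h) rfl
  simp only [Multiset.map_add, Multiset.prod_add]
  rw [show ∀ a b c d : MvPolynomial ι k, a * b - c * d = b * (a - c) + c * (b - d) by
    intros; ring]
  exact add_mem (Ideal.mul_mem_left _ _ hWmem) (Ideal.mul_mem_left _ _ hrest)

end walks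

end PolarAlg

open PolarAlg MvPolynomial in
theorem toric_ideal_generated_by_walks_general (k : Type*) [Field k]
    {n m : ℕ} (ε : Fin m → Sym2 (Fin n)) :
    RingHom.ker (aeval (fmon k ε) : MvPolynomial (Fin m) k →ₐ[k] MvPolynomial (Fin n) k) =
      Ideal.span {p : MvPolynomial (Fin m) k |
        ∃ r : ℕ, 1 ≤ r ∧ ∃ (vtx : ZMod (2 * r) → Fin n) (eidx : ZMod (2 * r) → Fin m),
          IsWalkIn ε vtx eidx ∧ p = pw k eidx} := by
  apply le_antisymm
  · refine ker_le_of_binomial_mem _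
      (fun u => Finsupp.equivFunOnFinite.symm (edgeDeg ε u.toMultiset)) (fun u => ?_) _
      (fun u v huv => ?_)
    · rw [← prod_map_X_toMultiset, aeval_prod_map_X, mon_eq_monomial]
    · rw [← prod_map_X_toMultiset, ← prod_map_X_toMultiset]
      exact prod_sub_prod_mem_walkIdeal (Finsupp.equivFunOnFinite.symm.injective huv)
  · rw [Ideal.span_le]
    rintro _ ⟨r, -, vtx, eidx, hw, rfl⟩
    exact aeval_pw_eq_zero hw

open PolarAlg MvPolynomial in
/-- Theorem 4.7 (first claim): the toric presentation ideal `P = ker(k[T] → k[f])` of the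
algebra generated by a set `f` of degree-2 monomials is generated by the binomials `p_w`
attached to the even closed walks of the graph with loops `G(f)`. -/
theorem toric_ideal_generated_by_walks (k : Type*) [Field k] [CharZero k]
    {n m : ℕ} (ε : Fin m → Sym2 (Fin n)) (hinj : Function.Injective ε) :
    RingHom.ker (aeval (fmon k ε) : MvPolynomial (Fin m) k →ₐ[k] MvPolynomial (Fin n) k) =
      Ideal.span {p : MvPolynomial (Fin m) k |
        ∃ r : ℕ, 1 ≤ r ∧ ∃ (vtx : ZMod (2 * r) → Fin n) (eidx : ZMod (2 * r) → Fin m),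
          IsWalkIn ε vtx eidx ∧ p = pw k eidx} :=
  toric_ideal_generated_by_walks_general k ε
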